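/- arXiv:1307.1690 — 2 statements merged into one kernel-verified Lean document; each statement's English description precedes it below -/
import Mathlib

section
/- Fix $n \geq 3$, $p \in (0, 1/6)$, and $s, l \in (0,1]$ with $(n-2) p s^2 l \geq 24 \log n$. Consider a family of mutually independent Bernoulli random variables: for each unordered pair $\{i, z\}$ of elements of $\{1,\dots,n\}$, indicators $E_{iz}$ with parameter $p$, $S^1_{iz}$ with parameter $s$, and $S^2_{iz}$ with parameter $s$; and for each $z \in \{1,\dots,n\}$, an indicator $L_z$ with parameter $l$. For each $i$ define $W(i,i) = \#\{ z \neq i : E_{iz} = S^1_{iz} = S^2_{iz} = L_z = 1\}$, and for each ordered pair $i \neq j$ define $W(i,j) = \#\{ z \notin \{i,j\} : E_{iz} = S^1_{iz} = E_{jz} = S^2_{jz} = L_z = 1\}$. Then with probability at least $1 - 2/n$, simultaneously: $W(i,i) \geq \tfrac{1}{2}(n-1) p s^2 l$ for every $i$, and $W(i,j) \leq \tfrac{1}{2}(n-2) p s^2 l$ for every ordered pair $i \neq j$. -/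
/-!
A node `z` witnesses the pair `(i, j)` through its own set of Bernoulli variables, and these sets
are disjoint for distinct `z`. Hence `W(i, j)` is a sum of independent indicators, with mean
`(n-1)ps²l` when `j = i` and `(n-2)p²s²l ≤ (n-2)ps²l/6` otherwise. The multiplicative Chernoff
bounds (the moment generating function at `t = ∓1`) bound the probability of each of the `n²`
threshold violations by `exp(-(n-2)ps²l/8) ≤ n⁻³`, and a union bound finishes.
-/

open MeasureTheory ProbabilityTheory Finset Real Function

section Independence

variable {Ω α κ : Type*} [MeasurableSpace Ω] {μ : Measure Ω}

lemma ProbabilityTheory.iIndepFun.iIndepSet_preimage {β : κ → Type*}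
    [∀ k, MeasurableSpace (β k)] {X : ∀ k, Ω → β k} (hX : ∀ k, Measurable (X k))
    (hind : iIndepFun X μ) {S : ∀ k, Set (β k)} (hS : ∀ k, MeasurableSet (S k)) :
    iIndepSet (fun k => X k ⁻¹' S k) μ :=
  (iIndepSet_iff_meas_biInter fun k => hX k (hS k)).2 fun _ =>
    hind.meas_biInter fun k _ => ⟨S k, hS k, rfl⟩

lemma ProbabilityTheory.iIndepSet.biInter_of_pairwise_disjoint {E : κ → Set Ω}
    (hE : ∀ k, MeasurableSet (E k)) (hind : iIndepSet E μ) {T : α → Finset κ}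
    (hT : Pairwise (Disjoint on T)) :
    iIndepSet (fun a => ⋂ k ∈ T a, E k) μ := by
  classical
  refine (iIndepSet_iff_meas_biInter fun a => measurableSet_biInter _ fun k _ => hE k).2
    fun S => ?_
  rw [← set_biInter_biUnion, hind.meas_biInter, prod_biUnion (hT.set_pairwise _)]
  exact prod_congr rfl fun a _ => (hind.meas_biInter _).symm

end Independence

section Chernoff

variable {Ω α : Type*} [MeasurableSpace Ω] {μ : Measure Ω} [IsProbabilityMeasure μ]

lemma mgf_indicator_one {B : Set Ω} (hB : MeasurableSet B) (t : ℝ) :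
    mgf (B.indicator 1) μ t = 1 + (exp t - 1) * μ.real B := by
  have h : (fun ω => exp (t * B.indicator 1 ω)) = fun ω => 1 + (exp t - 1) * B.indicator 1 ω := by
    funext ω; by_cases h : ω ∈ B <;> simp [h]
  rw [mgf, h, integral_add (integrable_const 1) ((integrable_const 1).indicator hB |>.const_mul _),
    integral_const_mul, integral_indicator_one hB]
  simp

variable [Fintype α] {B : α → Set Ω}

lemma mgf_sum_indicator_le (hB : ∀ a, MeasurableSet (B a)) (hind : iIndepSet B μ) (t : ℝ) :
    mgf (∑ a, (B a).indicator 1) μ t ≤ exp ((exp t - 1) * ∑ a, μ.real (B a)) := by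
  rw [Pi.one_def, hind.iIndepFun_indicator.mgf_sum fun a => measurable_const.indicator (hB a),
    mul_sum, exp_sum]
  refine prod_le_prod (fun a _ => mgf_nonneg) fun a _ => ?_
  rw [← Pi.one_def, mgf_indicator_one (hB a)]
  linarith [add_one_le_exp ((exp t - 1) * μ.real (B a))]

lemma integrable_exp_mul_sum_indicator (hB : ∀ a, MeasurableSet (B a)) (hind : iIndepSet B μ)
    (t : ℝ) : Integrable (fun ω => exp (t * (∑ a, (B a).indicator 1) ω)) μ :=
  hind.iIndepFun_indicator.integrable_exp_mul_sum (fun a => measurable_const.indicator (hB a))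
    fun a _ => integrable_exp_mul_of_mem_Icc (a := 0) (b := 1)
      (measurable_const.indicator (hB a)).aemeasurable
      (ae_of_all _ fun ω => by by_cases h : ω ∈ B a <;> simp [h])

lemma measureReal_sum_indicator_le_half_le (hB : ∀ a, MeasurableSet (B a))
    (hind : iIndepSet B μ) {m : ℝ} (hm : ∑ a, μ.real (B a) = m) :
    μ.real {ω | ∑ a, (B a).indicator 1 ω ≤ m / 2} ≤ exp (-(m / 8)) := by
  have hm0 : 0 ≤ m := hm ▸ sum_nonneg fun a _ => measureReal_nonneg
  have hexp : exp (-1) ≤ 3 / 8 := by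
    rw [exp_neg, inv_le_comm₀ (exp_pos 1) (by norm_num)]
    linarith [exp_one_gt_d9]
  have h := measure_le_le_exp_mul_mgf (μ := μ) (X := ∑ a, (B a).indicator 1) (m / 2) (t := -1)
    (by norm_num) (integrable_exp_mul_sum_indicator hB hind _)
  simp only [Finset.sum_apply] at h
  refine h.trans ?_
  calc exp (-(-1) * (m / 2)) * mgf (∑ a, (B a).indicator 1) μ (-1)
      ≤ exp (m / 2) * exp ((exp (-1) - 1) * m) := by
        rw [neg_neg, one_mul, ← hm]
        gcongr
        exact mgf_sum_indicator_le hB hind _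
    _ = exp (m * (exp (-1) - 1 / 2)) := by rw [← exp_add]; ring_nf
    _ ≤ exp (-(m / 8)) := by gcongr; nlinarith

lemma measureReal_le_sum_indicator_le (hB : ∀ a, MeasurableSet (B a))
    (hind : iIndepSet B μ) {m ε : ℝ} (hm : ∑ a, μ.real (B a) = m) (hmε : m ≤ ε / 3) :
    μ.real {ω | ε ≤ ∑ a, (B a).indicator 1 ω} ≤ exp (-(ε / 4)) := by
  have hm0 : 0 ≤ m := hm ▸ sum_nonneg fun a _ => measureReal_nonneg
  have he : exp 1 - 1 ≤ 9 / 4 := by linarith [exp_one_lt_d9]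
  have h := measure_ge_le_exp_mul_mgf (μ := μ) (X := ∑ a, (B a).indicator 1) ε (t := 1)
    (by norm_num) (integrable_exp_mul_sum_indicator hB hind _)
  simp only [Finset.sum_apply] at h
  refine h.trans ?_
  calc exp (-1 * ε) * mgf (∑ a, (B a).indicator 1) μ 1
      ≤ exp (-ε) * exp ((exp 1 - 1) * m) := by
        rw [neg_one_mul, ← hm]
        gcongr
        exact mgf_sum_indicator_le hB hind _
    _ = exp (-ε + (exp 1 - 1) * m) := by rw [← exp_add]
    _ ≤ exp (-(ε / 4)) := by gcongr; nlinarith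

end Chernoff

section Counting

variable {Ω : Type*}

lemma natCast_card_filter_eq_sum_indicator {ι : Type*} [Fintype ι] {P Q : ι → Prop}
    [DecidablePred P] [DecidablePred Q] {A : ι → Set Ω} {ω : Ω}
    (hQ : ∀ z, Q z ↔ P z ∧ ω ∈ A z) :
    ((univ.filter Q).card : ℝ) = ∑ z : Subtype P, (A z).indicator 1 ω := by
  rw [← sum_subtype (univ.filter P) (by simp) fun z => (A z).indicator 1 ω, sum_filter,
    natCast_card_filter]
  refine sum_congr rfl fun z _ => ?_
  by_cases hz : ω ∈ A z <;> simp [hQ, hz, Set.indicator_of_mem, Set.indicator_of_notMem]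

lemma exp_neg_le_inv_pow {x y : ℝ} (hy : 0 < y) (k : ℕ) (h : k * log y ≤ x) :
    exp (-x) ≤ (y ^ k)⁻¹ := by
  rw [← exp_log (pow_pos hy k), ← exp_neg, log_pow]
  exact exp_le_exp.2 (neg_le_neg h)

end Counting

section UnionBound

variable {Ω ι : Type*} [MeasurableSpace Ω] {μ : Measure Ω} [IsProbabilityMeasure μ] [Fintype ι]

lemma one_sub_ofReal_card_mul_le_measure {bad : ι → Set Ω} {G : Set Ω} {c : ℝ}
    (hbad : ∀ i, μ.real (bad i) ≤ c) (hG : ∀ ω, (∀ i, ω ∉ bad i) → ω ∈ G) :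
    1 - ENNReal.ofReal (Fintype.card ι * c) ≤ μ G := by
  have hU : μ (⋃ i, bad i) ≤ ENNReal.ofReal (Fintype.card ι * c) := by
    rw [← ofReal_measureReal]
    refine ENNReal.ofReal_le_ofReal ((measureReal_iUnion_fintype_le bad).trans ?_)
    simpa using sum_le_sum fun i (_ : i ∈ univ) => hbad i
  have hcover : Set.univ ⊆ G ∪ ⋃ i, bad i := fun ω _ => by
    by_cases hω : ∃ i, ω ∈ bad i
    · exact Or.inr (Set.mem_iUnion.2 hω)
    · exact Or.inl (hG ω (not_exists.1 hω))
  rw [tsub_le_iff_right, ← measure_univ (μ := μ)]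
  exact (measure_mono hcover).trans ((measure_union_le _ _).trans (add_le_add_right hU _))

end UnionBound

/-- Indices of the variables `E`, `S¹`, `S²` (on pairs of nodes) and `L` (on nodes), in this
order. -/
abbrev ModelVar (n : ℕ) := Sym2 (Fin n) ⊕ Sym2 (Fin n) ⊕ Sym2 (Fin n) ⊕ Fin n

section Model

variable {Ω : Type*} {n : ℕ}

def allTrue {κ : Type*} (X : κ → Ω → Bool) (T : Finset κ) : Set Ω := ⋂ k ∈ T, {ω | X k ω = true}

def correctWitnessVars (i z : Fin n) : Finset (ModelVar n) :=
  {Sum.inl s(i, z), Sum.inr (Sum.inl s(i, z)), Sum.inr (Sum.inr (Sum.inl s(i, z))),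
    Sum.inr (Sum.inr (Sum.inr z))}

def wrongWitnessVars (i j z : Fin n) : Finset (ModelVar n) :=
  {Sum.inl s(i, z), Sum.inr (Sum.inl s(i, z)), Sum.inl s(j, z),
    Sum.inr (Sum.inr (Sum.inl s(j, z))), Sum.inr (Sum.inr (Sum.inr z))}

def correctWitnessCount (X : ModelVar n → Ω → Bool) (i : Fin n) (ω : Ω) : ℕ :=
  #{z | z ≠ i ∧ X (Sum.inl s(i, z)) ω = true ∧ X (Sum.inr (Sum.inl s(i, z))) ω = true ∧
    X (Sum.inr (Sum.inr (Sum.inl s(i, z)))) ω = true ∧ X (Sum.inr (Sum.inr (Sum.inr z))) ω = true}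

def wrongWitnessCount (X : ModelVar n → Ω → Bool) (i j : Fin n) (ω : Ω) : ℕ :=
  #{z | z ≠ i ∧ z ≠ j ∧ X (Sum.inl s(i, z)) ω = true ∧ X (Sum.inr (Sum.inl s(i, z))) ω = true ∧
    X (Sum.inl s(j, z)) ω = true ∧ X (Sum.inr (Sum.inr (Sum.inl s(j, z)))) ω = true ∧
    X (Sum.inr (Sum.inr (Sum.inr z))) ω = true}

lemma natCast_correctWitnessCount (X : ModelVar n → Ω → Bool) (i : Fin n) (ω : Ω) :
    (correctWitnessCount X i ω : ℝ) =
      ∑ z : {z // z ≠ i}, (allTrue X (correctWitnessVars i z)).indicator 1 ω :=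
  natCast_card_filter_eq_sum_indicator (A := fun z => allTrue X (correctWitnessVars i z))
    fun z => by simp [allTrue, correctWitnessVars]

lemma natCast_wrongWitnessCount (X : ModelVar n → Ω → Bool) (i j : Fin n) (ω : Ω) :
    (wrongWitnessCount X i j ω : ℝ) =
      ∑ z : {z // z ≠ i ∧ z ≠ j}, (allTrue X (wrongWitnessVars i j z)).indicator 1 ω :=
  natCast_card_filter_eq_sum_indicator (A := fun z => allTrue X (wrongWitnessVars i j z))
    fun z => by simp [allTrue, wrongWitnessVars, and_assoc]

lemma pairwise_disjoint_correctWitnessVars (i : Fin n) :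
    Pairwise (Disjoint on fun z : {z // z ≠ i} => correctWitnessVars i z) := by
  rintro ⟨a, ha⟩ ⟨b, hb⟩ hab
  rw [onFun, disjoint_left]
  intro k hka hkb
  simp only [correctWitnessVars, mem_insert, mem_singleton] at hka hkb
  rcases hka with rfl | rfl | rfl | rfl <;> simp_all

lemma pairwise_disjoint_wrongWitnessVars {i j : Fin n} (hij : i ≠ j) :
    Pairwise (Disjoint on fun z : {z // z ≠ i ∧ z ≠ j} => wrongWitnessVars i j z) := by
  rintro ⟨a, ha⟩ ⟨b, hb⟩ hab
  rw [onFun, disjoint_left]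
  intro k hka hkb
  simp only [wrongWitnessVars, mem_insert, mem_singleton] at hka hkb
  rcases hka with rfl | rfl | rfl | rfl | rfl <;> simp_all

variable [MeasurableSpace Ω]

structure ReconciliationModel (μ : Measure Ω) (X : ModelVar n → Ω → Bool) (p s l : ℝ) : Prop where
  measurableSet : ∀ k, MeasurableSet {ω | X k ω = true}
  indep : iIndepSet (fun k => {ω | X k ω = true}) μ
  edge : ∀ e, μ.real {ω | X (Sum.inl e) ω = true} = p
  keep₁ : ∀ e, μ.real {ω | X (Sum.inr (Sum.inl e)) ω = true} = s
  keep₂ : ∀ e, μ.real {ω | X (Sum.inr (Sum.inr (Sum.inl e))) ω = true} = s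
  seed : ∀ z, μ.real {ω | X (Sum.inr (Sum.inr (Sum.inr z))) ω = true} = l

namespace ReconciliationModel

variable {μ : Measure Ω} {X : ModelVar n → Ω → Bool} {p s l : ℝ}

lemma of_iIndepFun (hmeas : ∀ k, Measurable (X k))
    (hindep : iIndepFun X μ) (hp : 0 ≤ p) (hs : 0 ≤ s) (hl : 0 ≤ l)
    (hE : ∀ e, μ {ω | X (Sum.inl e) ω = true} = ENNReal.ofReal p)
    (hS1 : ∀ e, μ {ω | X (Sum.inr (Sum.inl e)) ω = true} = ENNReal.ofReal s)
    (hS2 : ∀ e, μ {ω | X (Sum.inr (Sum.inr (Sum.inl e))) ω = true} = ENNReal.ofReal s)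
    (hL : ∀ z, μ {ω | X (Sum.inr (Sum.inr (Sum.inr z))) ω = true} = ENNReal.ofReal l) :
    ReconciliationModel μ X p s l where
  measurableSet k := hmeas k (measurableSet_singleton true)
  indep := hindep.iIndepSet_preimage hmeas fun _ => measurableSet_singleton true
  edge e := by simp [measureReal_def, hE, hp]
  keep₁ e := by simp [measureReal_def, hS1, hs]
  keep₂ e := by simp [measureReal_def, hS2, hs]
  seed z := by simp [measureReal_def, hL, hl]

lemma measurableSet_allTrue (h : ReconciliationModel μ X p s l) (T : Finset (ModelVar n)) :
    MeasurableSet (allTrue X T) :=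
  measurableSet_biInter _ fun k _ => h.measurableSet k

lemma measureReal_allTrue (h : ReconciliationModel μ X p s l) (T : Finset (ModelVar n)) :
    μ.real (allTrue X T) = ∏ k ∈ T, μ.real {ω | X k ω = true} := by
  rw [allTrue, measureReal_def, h.indep.meas_biInter, ENNReal.toReal_prod]
  rfl

lemma measureReal_correctWitness (h : ReconciliationModel μ X p s l) (i z : Fin n) :
    μ.real (allTrue X (correctWitnessVars i z)) = p * s ^ 2 * l := by
  rw [h.measureReal_allTrue, correctWitnessVars, prod_insert (by simp), prod_insert (by simp),
    prod_insert (by simp), prod_singleton, h.edge, h.keep₁, h.keep₂, h.seed]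
  ring

lemma measureReal_wrongWitness (h : ReconciliationModel μ X p s l) {i j z : Fin n}
    (hij : i ≠ j) (hzj : z ≠ j) :
    μ.real (allTrue X (wrongWitnessVars i j z)) = p ^ 2 * s ^ 2 * l := by
  rw [h.measureReal_allTrue, wrongWitnessVars, prod_insert (by simp [hij, hzj]),
    prod_insert (by simp), prod_insert (by simp), prod_insert (by simp), prod_singleton,
    h.edge, h.keep₁, h.edge, h.keep₂, h.seed]
  ring

variable [IsProbabilityMeasure μ]

lemma measureReal_correctWitnessCount_lt_le (h : ReconciliationModel μ X p s l) (i : Fin n) :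
    μ.real {ω | (correctWitnessCount X i ω : ℝ) < ((n : ℝ) - 1) * p * s ^ 2 * l / 2} ≤
      exp (-(((n : ℝ) - 1) * p * s ^ 2 * l / 8)) := by
  have hmean : ∑ z : {z // z ≠ i}, μ.real (allTrue X (correctWitnessVars i z)) =
      ((n : ℝ) - 1) * p * s ^ 2 * l := by
    simp only [h.measureReal_correctWitness, sum_const, card_univ, Fintype.card_subtype_compl,
      Fintype.card_unique, Fintype.card_fin, nsmul_eq_mul, Nat.cast_sub i.pos]
    ring
  simp_rw [natCast_correctWitnessCount]
  refine le_trans (measureReal_mono fun ω hω => ?_) <|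
    measureReal_sum_indicator_le_half_le (fun z => h.measurableSet_allTrue _)
      (h.indep.biInter_of_pairwise_disjoint h.measurableSet
        (pairwise_disjoint_correctWitnessVars i)) hmean
  exact le_of_lt (Set.mem_ofPred.1 hω)

lemma measureReal_lt_wrongWitnessCount_le (h : ReconciliationModel μ X p s l) (hp : p ≤ 1 / 6)
    {i j : Fin n} (hij : i ≠ j) :
    μ.real {ω | ((n : ℝ) - 2) * p * s ^ 2 * l / 2 < wrongWitnessCount X i j ω} ≤
      exp (-(((n : ℝ) - 2) * p * s ^ 2 * l / 8)) := by
  have hn : 2 ≤ n := by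
    have := Fin.val_ne_of_ne hij
    omega
  have hcard : (Fintype.card {z : Fin n // z ≠ i ∧ z ≠ j} : ℝ) = n - 2 := by
    rw [Fintype.card_subtype, filter_and, filter_ne', filter_ne']
    simp [hij, Nat.sub_sub, Nat.cast_sub hn]
  have hmean : ∑ z : {z // z ≠ i ∧ z ≠ j}, μ.real (allTrue X (wrongWitnessVars i j z)) =
      ((n : ℝ) - 2) * p ^ 2 * s ^ 2 * l := by
    rw [sum_congr rfl fun z _ => h.measureReal_wrongWitness hij z.2.2, sum_const, card_univ,
      nsmul_eq_mul, hcard]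
    ring
  have hsmall : ((n : ℝ) - 2) * p ^ 2 * s ^ 2 * l ≤ ((n : ℝ) - 2) * p * s ^ 2 * l / 2 / 3 := by
    have hq : 0 ≤ p * s ^ 2 * l := h.measureReal_correctWitness i i ▸ measureReal_nonneg
    have hn2 : (0 : ℝ) ≤ n - 2 := by rw [← hcard]; positivity
    nlinarith [mul_nonneg hn2 hq]
  simp_rw [natCast_wrongWitnessCount]
  refine le_trans (measureReal_mono fun ω hω => ?_) <|
    (measureReal_le_sum_indicator_le (fun z => h.measurableSet_allTrue _)
      (h.indep.biInter_of_pairwise_disjoint h.measurableSet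
        (pairwise_disjoint_wrongWitnessVars hij)) hmean hsmall).trans_eq (by ring_nf)
  exact le_of_lt (Set.mem_ofPred.1 hω)

end ReconciliationModel

end Model

/-- Full Theorem 1 (thm:p-large): in the Erdős–Rényi reconciliation model, with
probability at least `1 - 2/n`, every correct pair has at least `(n-1)ps²l/2`
similarity witnesses and every mismatched ordered pair has at most `(n-2)ps²l/2`. -/
theorem stmt2 {Ω : Type} [MeasurableSpace Ω] (μ : Measure Ω) [IsProbabilityMeasure μ]
    (n : ℕ) (hn : 3 ≤ n) (p s l : ℝ)
    (hp : 0 < p) (hp6 : p < 1 / 6) (hs : s ∈ Set.Ioc (0 : ℝ) 1) (hl : l ∈ Set.Ioc (0 : ℝ) 1)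
    (hcond : 24 * Real.log n ≤ ((n : ℝ) - 2) * p * s ^ 2 * l)
    (X : (Sym2 (Fin n) ⊕ Sym2 (Fin n) ⊕ Sym2 (Fin n) ⊕ Fin n) → Ω → Bool)
    (hmeas : ∀ k, Measurable (X k))
    (hindep : iIndepFun X μ)
    (hE : ∀ e : Sym2 (Fin n), μ {ω | X (Sum.inl e) ω = true} = ENNReal.ofReal p)
    (hS1 : ∀ e : Sym2 (Fin n), μ {ω | X (Sum.inr (Sum.inl e)) ω = true} = ENNReal.ofReal s)
    (hS2 : ∀ e : Sym2 (Fin n),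
      μ {ω | X (Sum.inr (Sum.inr (Sum.inl e))) ω = true} = ENNReal.ofReal s)
    (hL : ∀ z : Fin n, μ {ω | X (Sum.inr (Sum.inr (Sum.inr z))) ω = true} = ENNReal.ofReal l)
    (W : Fin n → Fin n → Ω → ℕ)
    (hWdiag : ∀ i ω, W i i ω = (Finset.univ.filter fun z : Fin n => z ≠ i ∧
        X (Sum.inl (s(i, z))) ω = true ∧
        X (Sum.inr (Sum.inl (s(i, z)))) ω = true ∧
        X (Sum.inr (Sum.inr (Sum.inl (s(i, z))))) ω = true ∧
        X (Sum.inr (Sum.inr (Sum.inr z))) ω = true).card)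
    (hWoff : ∀ i j : Fin n, i ≠ j → ∀ ω, W i j ω =
        (Finset.univ.filter fun z : Fin n => z ≠ i ∧ z ≠ j ∧
        X (Sum.inl (s(i, z))) ω = true ∧
        X (Sum.inr (Sum.inl (s(i, z)))) ω = true ∧
        X (Sum.inl (s(j, z))) ω = true ∧
        X (Sum.inr (Sum.inr (Sum.inl (s(j, z))))) ω = true ∧
        X (Sum.inr (Sum.inr (Sum.inr z))) ω = true).card) :
    1 - 2 / (n : ENNReal) ≤ μ {ω |
      (∀ i : Fin n, ((n : ℝ) - 1) * p * s ^ 2 * l / 2 ≤ (W i i ω : ℝ)) ∧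
      (∀ i j : Fin n, i ≠ j → (W i j ω : ℝ) ≤ ((n : ℝ) - 2) * p * s ^ 2 * l / 2)} := by
  have hWc : ∀ i ω, W i i ω = correctWitnessCount X i ω := hWdiag
  have hWw : ∀ i j, i ≠ j → ∀ ω, W i j ω = wrongWitnessCount X i j ω := hWoff
  have hM := ReconciliationModel.of_iIndepFun hmeas hindep hp.le hs.1.le hl.1.le hE hS1 hS2 hL
  have hn0 : (0 : ℝ) < n := by positivity
  have hq : 0 < p * s ^ 2 * l := by have := hs.1; have := hl.1; positivity
  have hcube : ∀ x, 24 * Real.log n ≤ x → Real.exp (-(x / 8)) ≤ ((n : ℝ) ^ 3)⁻¹ := fun x hx =>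
    exp_neg_le_inv_pow hn0 3 (by push_cast; linarith)
  have hunion :
      ENNReal.ofReal (Fintype.card (Fin n × Fin n) * ((n : ℝ) ^ 3)⁻¹) ≤ 2 / (n : ENNReal) := by
    rw [← ENNReal.ofReal_natCast, ← ENNReal.ofReal_ofNat 2, ← ENNReal.ofReal_div_of_pos hn0,
      Fintype.card_prod, Fintype.card_fin]
    refine ENNReal.ofReal_le_ofReal ?_
    field_simp
    push_cast
    nlinarith
  refine (tsub_le_tsub_left hunion 1).trans (one_sub_ofReal_card_mul_le_measure
    (bad := fun ij => if ij.1 = ij.2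
      then {ω | (correctWitnessCount X ij.1 ω : ℝ) < ((n : ℝ) - 1) * p * s ^ 2 * l / 2}
      else {ω | ((n : ℝ) - 2) * p * s ^ 2 * l / 2 < wrongWitnessCount X ij.1 ij.2 ω}) ?_ ?_)
  · rintro ⟨i, j⟩
    dsimp only
    split_ifs with hij
    · exact (hM.measureReal_correctWitnessCount_lt_le i).trans (hcube _ (by nlinarith))
    · exact (hM.measureReal_lt_wrongWitnessCount_le hp6.le hij).trans (hcube _ hcond)
  · intro ω hω
    refine ⟨fun i => ?_, fun i j hij => ?_⟩
    · simpa [hWc] using hω (i, i)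
    · simpa [hij, hWw i j hij] using hω (i, j)
end

section
/- Fix $s, l \in (0,1]$ and a constant $c > 0$, and let $n \geq 3$ and $p \leq c \log n / n$. Consider the Erdős–Rényi reconciliation model: mutually independent Bernoulli indicators $E_{iz}$ (parameter $p$) for unordered pairs, $S^1_{iz}, S^2_{iz}$ (parameter $s$), and $L_z$ (parameter $l$), with similarity-witness count $W(i,j) = \#\{ z \notin \{i,j\} : E_{iz} = S^1_{iz} = E_{jz} = S^2_{jz} = L_z = 1\}$ for $i \neq j$. Then the probability that there exists an ordered pair $i \neq j$ with $W(i,j) \geq 3$ is at most $n(n-1) \cdot \frac{(n-2)^3 p^6 s^6 l^3}{6}$, which is $O(\log^6 n / n)$; in particular it tends to $0$ as $n \to \infty$. -/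
/-! For distinct `i, j`, the event that `z ∉ {i, j}` witnesses `(i, j)` is the conjunction of five
indicators, and these index sets are pairwise disjoint for different `z`. By independence, any
three given nodes are simultaneously witnesses with probability `(p²s²l)³`. A union bound over the
`C(n-2, 3) ≤ (n-2)³/6` triples and the `n(n-1)` ordered pairs gives the bound, which is
`O(log⁶ n / n)` once `p ≤ c log n / n`. -/

open MeasureTheory ProbabilityTheory Filter Finset
open scoped ENNReal

theorem Nat.choose_three_le_pow_div (m : ℕ) : (m.choose 3 : ℝ) ≤ (m : ℝ) ^ 3 / 6 := by
  simpa [Nat.factorial] using Nat.choose_le_pow_div (α := ℝ) 3 m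

theorem ProbabilityTheory.iIndepFun.measure_card_filter_ge_le_choose_mul_pow {ι κ Ω : Type*}
    [MeasurableSpace Ω] {μ : Measure Ω} {X : ι → Ω → Bool} (hX : iIndepFun X μ)
    (G : Finset κ) {F : κ → Finset ι} (hF : (G : Set κ).PairwiseDisjoint F)
    [∀ ω, DecidablePred fun z => ∀ k ∈ F z, X k ω = true]
    {x : ℝ≥0∞} (hx : ∀ z ∈ G, ∏ k ∈ F z, μ {ω | X k ω = true} ≤ x) (r : ℕ) :
    μ {ω | r ≤ #{z ∈ G | ∀ k ∈ F z, X k ω = true}} ≤ (G.card.choose r) * x ^ r := by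
  classical
  have hsub : {ω | r ≤ #{z ∈ G | ∀ k ∈ F z, X k ω = true}} ⊆
      ⋃ t ∈ G.powersetCard r, ⋂ k ∈ t.biUnion F, {ω | X k ω = true} := by
    intro ω hω
    obtain ⟨t, ht, rfl⟩ := exists_subset_card_eq hω
    refine Set.mem_iUnion₂.mpr ⟨t, mem_powersetCard.mpr ⟨ht.trans (filter_subset _ _), rfl⟩, ?_⟩
    simp only [Set.mem_iInter, mem_biUnion, Set.mem_ofPred_eq]
    rintro k ⟨z, hz, hk⟩
    exact (mem_filter.mp (ht hz)).2 k hk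
  have hterm : ∀ t ∈ G.powersetCard r, μ (⋂ k ∈ t.biUnion F, {ω | X k ω = true}) ≤ x ^ r := by
    intro t ht
    obtain ⟨htG, rfl⟩ := mem_powersetCard.mp ht
    rw [hX.meas_biInter (s := fun k => {ω | X k ω = true}) fun k _ => ⟨{true}, trivial, rfl⟩,
      prod_biUnion (hF.subset htG)]
    exact prod_le_pow_card _ _ _ fun z hz => hx z (htG hz)
  calc μ {ω | r ≤ #{z ∈ G | ∀ k ∈ F z, X k ω = true}}
      ≤ ∑ t ∈ G.powersetCard r, μ (⋂ k ∈ t.biUnion F, {ω | X k ω = true}) :=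
        (measure_mono hsub).trans (measure_biUnion_finset_le _ _)
    _ ≤ ∑ _t ∈ G.powersetCard r, x ^ r := sum_le_sum hterm
    _ = G.card.choose r * x ^ r := by rw [sum_const, card_powersetCard, nsmul_eq_mul]

theorem MeasureTheory.measure_exists_ne_le {ι Ω : Type*} [Fintype ι] [MeasurableSpace Ω]
    (μ : Measure Ω) (A : ι → ι → Set Ω) {b : ℝ≥0∞} (hA : ∀ i j, i ≠ j → μ (A i j) ≤ b) :
    μ {ω | ∃ i j, i ≠ j ∧ ω ∈ A i j} ≤
      (Fintype.card ι * (Fintype.card ι - 1) : ℕ) * b := by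
  classical
  have hsub : {ω | ∃ i j, i ≠ j ∧ ω ∈ A i j} ⊆ ⋃ ij ∈ (univ : Finset ι).offDiag, A ij.1 ij.2 := by
    rintro ω ⟨i, j, hij, hω⟩
    exact Set.mem_iUnion₂.mpr ⟨(i, j), by simpa using hij, hω⟩
  calc μ {ω | ∃ i j, i ≠ j ∧ ω ∈ A i j}
      ≤ ∑ ij ∈ (univ : Finset ι).offDiag, μ (A ij.1 ij.2) :=
        (measure_mono hsub).trans (measure_biUnion_finset_le _ _)
    _ ≤ ∑ _ij ∈ (univ : Finset ι).offDiag, b :=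
        sum_le_sum fun ij hij => hA _ _ (mem_offDiag.mp hij).2.2
    _ = (Fintype.card ι * (Fintype.card ι - 1) : ℕ) * b := by
        rw [sum_const, offDiag_card, card_univ, ← Nat.mul_sub_one, nsmul_eq_mul]

theorem mul_sub_one_mul_sub_two_pow_div_six_le_log_pow_div {x p c s l : ℝ} (hx : 2 ≤ x)
    (hp : 0 ≤ p) (hpc : p ≤ c * Real.log x / x) (hl : 0 ≤ l) :
    x * (x - 1) * ((x - 2) ^ 3 * p ^ 6 * s ^ 6 * l ^ 3) / 6 ≤
      (c ^ 6 * s ^ 6 * l ^ 3 / 6) * Real.log x ^ 6 / x := by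
  have hp6 : p ^ 6 ≤ (c * Real.log x / x) ^ 6 := pow_le_pow_left₀ hp hpc 6
  calc x * (x - 1) * ((x - 2) ^ 3 * p ^ 6 * s ^ 6 * l ^ 3) / 6
      ≤ x * x * (x ^ 3 * (c * Real.log x / x) ^ 6 * s ^ 6 * l ^ 3) / 6 := by
        gcongr <;> linarith
    _ = (c ^ 6 * s ^ 6 * l ^ 3 / 6) * Real.log x ^ 6 / x := by
        field_simp

theorem tendsto_const_mul_log_pow_div_natCast (C : ℝ) (k : ℕ) :
    Tendsto (fun m : ℕ => C * Real.log m ^ k / m) atTop (nhds 0) := by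
  have h := ((Real.tendsto_pow_log_div_mul_add_atTop 1 0 k one_ne_zero).comp
    tendsto_natCast_atTop_atTop).const_mul C
  simpa [Function.comp_def, mul_div_assoc] using h

theorem ENNReal.natCast_mul_choose_three_mul_ofReal_pow_le {n : ℕ} (hn : 2 ≤ n) {y : ℝ}
    (hy : 0 ≤ y) :
    ((n * (n - 1) : ℕ) : ℝ≥0∞) * (((n - 2).choose 3 : ℕ) * ENNReal.ofReal y ^ 3) ≤
      ENNReal.ofReal (n * (n - 1) * ((n - 2) ^ 3 * y ^ 3) / 6) := by
  rw [← ENNReal.ofReal_pow hy, ← ENNReal.ofReal_natCast, ← ENNReal.ofReal_natCast,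
    ← ENNReal.ofReal_mul (by positivity), ← ENNReal.ofReal_mul (by positivity)]
  apply ENNReal.ofReal_le_ofReal
  have hchoose := Nat.choose_three_le_pow_div (n - 2)
  push_cast [Nat.cast_sub (by omega : 1 ≤ n), Nat.cast_sub hn] at hchoose ⊢
  have hn1 : (0 : ℝ) ≤ n * (n - 1) := by
    have : (2 : ℝ) ≤ n := by exact_mod_cast hn
    nlinarith
  calc (n : ℝ) * (n - 1) * (((n - 2).choose 3 : ℕ) * y ^ 3)
      ≤ n * (n - 1) * ((n - 2) ^ 3 / 6 * y ^ 3) := by gcongr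
    _ = n * (n - 1) * ((n - 2) ^ 3 * y ^ 3) / 6 := by ring

/-- The indices of `E_{iz}, S¹_{iz}, E_{jz}, S²_{jz}, L_z`. -/
def witnessIndices {V : Type*} [DecidableEq V] (i j z : V) :
    Finset (Sym2 V ⊕ Sym2 V ⊕ Sym2 V ⊕ V) :=
  {Sum.inl s(i, z), Sum.inr (Sum.inl s(i, z)), Sum.inl s(j, z),
    Sum.inr (Sum.inr (Sum.inl s(j, z))), Sum.inr (Sum.inr (Sum.inr z))}

theorem pairwiseDisjoint_witnessIndices {V : Type*} [DecidableEq V] (i j : V) (G : Finset V)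
    (hG : ∀ z ∈ G, z ≠ i ∧ z ≠ j) :
    (G : Set V).PairwiseDisjoint (witnessIndices i j) := by
  intro z hz z' hz' hzz'
  obtain ⟨hzi, hzj⟩ := hG z hz
  obtain ⟨hzi', hzj'⟩ := hG z' hz'
  rw [Function.onFun, disjoint_left]
  intro k hk hk'
  simp only [witnessIndices, mem_insert, mem_singleton] at hk hk'
  rcases hk with rfl | rfl | rfl | rfl | rfl <;> simp at hk' <;> tauto

theorem prod_witnessIndices {V M : Type*} [DecidableEq V] [CommMonoid M] {i j : V} (hij : i ≠ j)
    (z : V) (f : Sym2 V ⊕ Sym2 V ⊕ Sym2 V ⊕ V → M) :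
    ∏ k ∈ witnessIndices i j z, f k =
      f (Sum.inl s(i, z)) * (f (Sum.inr (Sum.inl s(i, z))) * (f (Sum.inl s(j, z)) *
        (f (Sum.inr (Sum.inr (Sum.inl s(j, z)))) * f (Sum.inr (Sum.inr (Sum.inr z)))))) := by
  rw [witnessIndices, prod_insert (by grind [Sym2.eq_iff]), prod_insert (by simp),
    prod_insert (by simp), prod_insert (by simp), prod_singleton]

theorem card_filter_witness_eq {V : Type*} [Fintype V] [DecidableEq V] (i j : V)
    (b : Sym2 V ⊕ Sym2 V ⊕ Sym2 V ⊕ V → Bool) :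
    #{z | z ≠ i ∧ z ≠ j ∧ b (Sum.inl s(i, z)) = true ∧ b (Sum.inr (Sum.inl s(i, z))) = true ∧
        b (Sum.inl s(j, z)) = true ∧ b (Sum.inr (Sum.inr (Sum.inl s(j, z)))) = true ∧
        b (Sum.inr (Sum.inr (Sum.inr z))) = true} =
      #{z ∈ ({z | z ≠ i ∧ z ≠ j} : Finset V) | ∀ k ∈ witnessIndices i j z, b k = true} := by
  rw [filter_filter]
  simp [witnessIndices, and_assoc]

theorem card_filter_ne_and_ne {V : Type*} [Fintype V] [DecidableEq V] {i j : V} (hij : i ≠ j) :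
    #({z | z ≠ i ∧ z ≠ j} : Finset V) = Fintype.card V - 2 := by
  rw [show ({z | z ≠ i ∧ z ≠ j} : Finset V) = univ \ {i, j} by ext; simp [not_or],
    card_sdiff_of_subset (subset_univ _), card_univ, card_pair hij]

theorem stmt4_general {Ω : Type} [MeasurableSpace Ω] (μ : Measure Ω)
    (s l c : ℝ) (hs : s ∈ Set.Ioc (0 : ℝ) 1) (hl : l ∈ Set.Ioc (0 : ℝ) 1)
    (n : ℕ) (hn : 3 ≤ n) (p : ℝ) (hp0 : 0 < p)
    (hpc : p ≤ c * Real.log n / n)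
    (X : (Sym2 (Fin n) ⊕ Sym2 (Fin n) ⊕ Sym2 (Fin n) ⊕ Fin n) → Ω → Bool)
    (hindep : iIndepFun X μ)
    (hE : ∀ e : Sym2 (Fin n), μ {ω | X (Sum.inl e) ω = true} = ENNReal.ofReal p)
    (hS1 : ∀ e : Sym2 (Fin n), μ {ω | X (Sum.inr (Sum.inl e)) ω = true} = ENNReal.ofReal s)
    (hS2 : ∀ e : Sym2 (Fin n),
      μ {ω | X (Sum.inr (Sum.inr (Sum.inl e))) ω = true} = ENNReal.ofReal s)
    (hL : ∀ z : Fin n, μ {ω | X (Sum.inr (Sum.inr (Sum.inr z))) ω = true} = ENNReal.ofReal l)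
    (W : Fin n → Fin n → Ω → ℕ)
    (hWoff : ∀ i j : Fin n, i ≠ j → ∀ ω, W i j ω =
        (Finset.univ.filter fun z : Fin n => z ≠ i ∧ z ≠ j ∧
        X (Sum.inl (s(i, z))) ω = true ∧
        X (Sum.inr (Sum.inl (s(i, z)))) ω = true ∧
        X (Sum.inl (s(j, z))) ω = true ∧
        X (Sum.inr (Sum.inr (Sum.inl (s(j, z))))) ω = true ∧
        X (Sum.inr (Sum.inr (Sum.inr z))) ω = true).card) :
    μ {ω | ∃ i j : Fin n, i ≠ j ∧ 3 ≤ W i j ω} ≤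
      ENNReal.ofReal ((n : ℝ) * ((n : ℝ) - 1) *
        (((n : ℝ) - 2) ^ 3 * p ^ 6 * s ^ 6 * l ^ 3) / 6) ∧
    (n : ℝ) * ((n : ℝ) - 1) * (((n : ℝ) - 2) ^ 3 * p ^ 6 * s ^ 6 * l ^ 3) / 6 ≤
      (c ^ 6 * s ^ 6 * l ^ 3 / 6) * (Real.log n) ^ 6 / n ∧
    Tendsto (fun m : ℕ => (c ^ 6 * s ^ 6 * l ^ 3 / 6) * (Real.log m) ^ 6 / m)
      atTop (nhds 0) := by
  have hq : 0 ≤ p ^ 2 * s ^ 2 * l := by have := hl.1; positivity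
  have hpair : ∀ i j : Fin n, i ≠ j → μ {ω | 3 ≤ W i j ω} ≤
      ((n - 2).choose 3 : ℕ) * ENNReal.ofReal (p ^ 2 * s ^ 2 * l) ^ 3 := by
    intro i j hij
    have hW : ∀ ω, W i j ω =
        #{z ∈ ({z | z ≠ i ∧ z ≠ j} : Finset (Fin n)) | ∀ k ∈ witnessIndices i j z, X k ω = true} :=
      fun ω => by rw [hWoff i j hij, card_filter_witness_eq i j fun k => X k ω]
    have hprod : ∀ z ∈ ({z | z ≠ i ∧ z ≠ j} : Finset (Fin n)),
        ∏ k ∈ witnessIndices i j z, μ {ω | X k ω = true} ≤ ENNReal.ofReal (p ^ 2 * s ^ 2 * l) :=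
      fun z _ => by
        rw [prod_witnessIndices hij, hE, hS1, hE, hS2, hL, ← ENNReal.ofReal_mul hs.1.le,
          ← ENNReal.ofReal_mul hp0.le, ← ENNReal.ofReal_mul hs.1.le, ← ENNReal.ofReal_mul hp0.le]
        exact (congrArg ENNReal.ofReal (by ring)).le
    have hthree := hindep.measure_card_filter_ge_le_choose_mul_pow _
      (pairwiseDisjoint_witnessIndices i j _ (by simp)) hprod 3
    rw [card_filter_ne_and_ne hij, Fintype.card_fin] at hthree
    simp only [hW]
    exact hthree
  have hn2 : (2 : ℝ) ≤ n := by exact_mod_cast (by omega : 2 ≤ n)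
  refine ⟨?_, mul_sub_one_mul_sub_two_pow_div_six_le_log_pow_div hn2 hp0.le hpc hl.1.le,
    tendsto_const_mul_log_pow_div_natCast _ 6⟩
  calc μ {ω | ∃ i j : Fin n, i ≠ j ∧ 3 ≤ W i j ω}
      ≤ (n * (n - 1) : ℕ) * (((n - 2).choose 3 : ℕ) * ENNReal.ofReal (p ^ 2 * s ^ 2 * l) ^ 3) :=
        (measure_exists_ne_le μ (fun i j => {ω | 3 ≤ W i j ω}) hpair).trans_eq
          (by rw [Fintype.card_fin])
    _ ≤ _ := (ENNReal.natCast_mul_choose_three_mul_ofReal_pow_le (by omega) hq).trans_eq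
        (by congr 1; ring)

/-- Probabilistic core of Lemma 3: when `p ≤ c log n / n`, with high probability no
mismatched ordered pair has 3 or more similarity witnesses; the failure probability
is at most `n(n-1)·(n-2)³p⁶s⁶l³/6 = O(log⁶ n / n)`, which tends to 0. -/
theorem stmt4 {Ω : Type} [MeasurableSpace Ω] (μ : Measure Ω) [IsProbabilityMeasure μ]
    (s l c : ℝ) (hs : s ∈ Set.Ioc (0 : ℝ) 1) (hl : l ∈ Set.Ioc (0 : ℝ) 1) (hc : 0 < c)
    (n : ℕ) (hn : 3 ≤ n) (p : ℝ) (hp0 : 0 < p) (hp1 : p ≤ 1)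
    (hpc : p ≤ c * Real.log n / n)
    (X : (Sym2 (Fin n) ⊕ Sym2 (Fin n) ⊕ Sym2 (Fin n) ⊕ Fin n) → Ω → Bool)
    (hmeas : ∀ k, Measurable (X k))
    (hindep : iIndepFun X μ)
    (hE : ∀ e : Sym2 (Fin n), μ {ω | X (Sum.inl e) ω = true} = ENNReal.ofReal p)
    (hS1 : ∀ e : Sym2 (Fin n), μ {ω | X (Sum.inr (Sum.inl e)) ω = true} = ENNReal.ofReal s)
    (hS2 : ∀ e : Sym2 (Fin n),
      μ {ω | X (Sum.inr (Sum.inr (Sum.inl e))) ω = true} = ENNReal.ofReal s)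
    (hL : ∀ z : Fin n, μ {ω | X (Sum.inr (Sum.inr (Sum.inr z))) ω = true} = ENNReal.ofReal l)
    (W : Fin n → Fin n → Ω → ℕ)
    (hWoff : ∀ i j : Fin n, i ≠ j → ∀ ω, W i j ω =
        (Finset.univ.filter fun z : Fin n => z ≠ i ∧ z ≠ j ∧
        X (Sum.inl (s(i, z))) ω = true ∧
        X (Sum.inr (Sum.inl (s(i, z)))) ω = true ∧
        X (Sum.inl (s(j, z))) ω = true ∧
        X (Sum.inr (Sum.inr (Sum.inl (s(j, z))))) ω = true ∧
        X (Sum.inr (Sum.inr (Sum.inr z))) ω = true).card) :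
    μ {ω | ∃ i j : Fin n, i ≠ j ∧ 3 ≤ W i j ω} ≤
      ENNReal.ofReal ((n : ℝ) * ((n : ℝ) - 1) *
        (((n : ℝ) - 2) ^ 3 * p ^ 6 * s ^ 6 * l ^ 3) / 6) ∧
    (n : ℝ) * ((n : ℝ) - 1) * (((n : ℝ) - 2) ^ 3 * p ^ 6 * s ^ 6 * l ^ 3) / 6 ≤
      (c ^ 6 * s ^ 6 * l ^ 3 / 6) * (Real.log n) ^ 6 / n ∧
    Tendsto (fun m : ℕ => (c ^ 6 * s ^ 6 * l ^ 3 / 6) * (Real.log m) ^ 6 / m)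
      atTop (nhds 0) :=
  stmt4_general μ s l c hs hl n hn p hp0 hpc X hindep hE hS1 hS2 hL W hWoff
end
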